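/- arXiv:1106.6262 — 3 statements merged into one kernel-verified Lean document; each statement's English description precedes it below -/
import Mathlib

section
/- For every section-hyperbolic polynomial a_0 + a_1 x + ... + a_n x^n and every index i with 1 ≤ i ≤ n−1, one has a_i^2 ≥ 3·a_{i−1}·a_{i+1}. Consequently, for every i ≥ 1, the infimum m_i of a_i^2/(a_{i−1} a_{i+1}) over all section-hyperbolic polynomials of degree at least i+1 satisfies m_i ≥ 3. -/
open Polynomial Filter

/-- A real polynomial is hyperbolic if all of its complex roots are real. -/
def Hyperbolic (P : Polynomial ℝ) : Prop :=
  ∀ z : ℂ, Polynomial.aeval z P = 0 → z.im = 0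

/-- The `i`-th section `a_0 + a_1 x + ... + a_i x^i` of the coefficient sequence `a`. -/
noncomputable def sect (a : ℕ → ℝ) (i : ℕ) : Polynomial ℝ :=
  ∑ j ∈ Finset.range (i + 1), Polynomial.C (a j) * Polynomial.X ^ j

/-- A polynomial `a_0 + ... + a_n x^n` with all coefficients positive is section-hyperbolic
if each of its sections of degree `1,...,n` is hyperbolic. -/
def SectionHyperbolic (a : ℕ → ℝ) (n : ℕ) : Prop :=
  (∀ i ≤ n, 0 < a i) ∧ ∀ i, 1 ≤ i → i ≤ n → Hyperbolic (sect a i)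

/-!
Let `t` be the multiset of negated roots of the section of degree `i + 1`. By Vieta,
`a_{i+1-k} = a_{i+1} e_k(t)`, so the claim reads `3 e₂ ≤ e₁²`. As `t ≥ 0`, Newton's identities
turn the Cauchy–Schwarz inequality `p₂² ≤ p₁ p₃` for the power sums of `t` into
`4 e₂² ≤ 3 e₁ e₃ + e₁² e₂`, and the claim at `i - 1`, which in terms of the same `t` reads
`3 e₁ e₃ ≤ e₂²` (trivial for `i = 1`, where `e₃ = 0`), then leaves `3 e₂² ≤ e₁² e₂`. So the
bound follows by induction on `i`.

The infimum needs a nonempty set, as `sInf ∅ = 0`: the sections of degree `k ≤ n` of the partial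
theta function `∑ q^{l²} x^l` with `q = 1/(n+2)` alternate in sign at the points `-q^{-2j}`,
`j = 0, …, k`, where the `j`-th term dominates; so they have `k` real roots.
-/

namespace Multiset

section CommSemiring

variable {R : Type*} [CommSemiring R]

theorem esymm_of_card_lt {s : Multiset R} {k : ℕ} (h : card s < k) : s.esymm k = 0 := by
  simp [esymm, powersetCard_eq_empty k h]

theorem esymm_cons (a : R) (s : Multiset R) (k : ℕ) :
    (a ::ₘ s).esymm (k + 1) = s.esymm (k + 1) + a * s.esymm k := by
  simp only [esymm, powersetCard_cons, map_add, sum_add, map_map, Function.comp_def, prod_cons,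
    sum_map_mul_left]

end CommSemiring

section CommRing

variable {R : Type*} [CommRing R]

theorem esymm_one_eq_sum (s : Multiset R) : s.esymm 1 = s.sum := by
  simp [esymm, powersetCard_one]

theorem two_mul_esymm_two (s : Multiset R) :
    2 * s.esymm 2 = s.sum ^ 2 - (s.map (· ^ 2)).sum := by
  induction s using Multiset.induction with
  | empty => simp [esymm, powersetCard_zero_right]
  | cons a s ih =>
    rw [esymm_cons, esymm_one_eq_sum, sum_cons, map_cons, sum_cons]
    linear_combination ih

theorem six_mul_esymm_three (s : Multiset R) :
    6 * s.esymm 3 =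
      s.sum ^ 3 - 3 * s.sum * (s.map (· ^ 2)).sum + 2 * (s.map (· ^ 3)).sum := by
  induction s using Multiset.induction with
  | empty => simp [esymm, powersetCard_zero_right]
  | cons a s ih =>
    rw [esymm_cons, sum_cons, map_cons, sum_cons, map_cons, sum_cons]
    linear_combination ih + 3 * a * two_mul_esymm_two s

end CommRing

section LinearOrderedCommRing

variable {R : Type*} [CommRing R] [LinearOrder R] [IsStrictOrderedRing R]

theorem sq_sum_map_sq_le_sum_mul_sum_map_pow_three {s : Multiset R} (hs : ∀ x ∈ s, 0 ≤ x) :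
    (s.map (· ^ 2)).sum ^ 2 ≤ s.sum * (s.map (· ^ 3)).sum := by
  have hsum (f : R → R) : (s.map f).sum = ∑ x ∈ s.toEnumFinset, f x.1 := by
    conv_lhs => rw [← map_toEnumFinset_fst s, map_map]
    rfl
  have hmem {x : R × ℕ} (hx : x ∈ s.toEnumFinset) : 0 ≤ x.1 :=
    hs _ (mem_of_mem_toEnumFinset hx)
  rw [hsum, hsum, show s.sum = ∑ x ∈ s.toEnumFinset, x.1 by simpa using hsum id]
  exact Finset.sum_sq_le_sum_mul_sum_of_sq_le_mul _ (fun x hx => hmem hx)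
    (fun x hx => pow_nonneg (hmem hx) 3) (fun x _ => (by ring : _ = _).le)

theorem four_mul_esymm_two_sq_le {s : Multiset R} (hs : ∀ x ∈ s, 0 ≤ x) :
    4 * s.esymm 2 ^ 2 ≤ 3 * s.esymm 1 * s.esymm 3 + s.esymm 1 ^ 2 * s.esymm 2 := by
  have h2 := two_mul_esymm_two s
  have h3 := six_mul_esymm_three s
  rw [esymm_one_eq_sum]
  have hid : 2 * (3 * s.sum * s.esymm 3 + s.sum ^ 2 * s.esymm 2 - 4 * s.esymm 2 ^ 2) =
      2 * (s.sum * (s.map (· ^ 3)).sum - (s.map (· ^ 2)).sum ^ 2) := by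
    linear_combination s.sum * h3 + (s.sum ^ 2 - 2 * (2 * s.esymm 2 + s.sum ^ 2 -
      (s.map (· ^ 2)).sum)) * h2
  linarith [sq_sum_map_sq_le_sum_mul_sum_map_pow_three hs]

theorem three_mul_esymm_two_le {s : Multiset R} (hs : ∀ x ∈ s, 0 ≤ x)
    (h : 3 * (s.esymm 1 * s.esymm 3) ≤ s.esymm 2 ^ 2) : 3 * s.esymm 2 ≤ s.esymm 1 ^ 2 := by
  rcases le_or_gt (s.esymm 2) 0 with hle | hpos
  · nlinarith [sq_nonneg (s.esymm 1)]
  · have key := four_mul_esymm_two_sq_le hs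
    nlinarith

end LinearOrderedCommRing

end Multiset

theorem Hyperbolic.card_roots {p : ℝ[X]} (hp : Hyperbolic p) : p.roots.card = p.natDegree := by
  classical
  have hreal : ∀ z ∈ (p.map (algebraMap ℝ ℂ)).roots, z ∈ (algebraMap ℝ ℂ).range := by
    intro z hz
    have him := hp z <| by
      rw [aeval_def, ← eval_map]; exact (mem_roots (ne_zero_of_mem_roots hz)).1 hz
    exact ⟨z.re, Complex.ext (by simp) (by simp [him])⟩
  rw [← Multiset.card_map (algebraMap ℝ ℂ),
    ← filter_roots_map_range_eq_map_roots (algebraMap ℝ ℂ).injective,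
    Multiset.filter_eq_self.2 hreal,
    IsAlgClosed.card_roots_map_eq_natDegree_of_injective _ (algebraMap ℝ ℂ).injective]

theorem hyperbolic_of_card_roots {p : ℝ[X]} (hp0 : p ≠ 0) (h : p.roots.card = p.natDegree) :
    Hyperbolic p := by
  intro z hz
  have hmap : p.map (algebraMap ℝ ℂ) ≠ 0 :=
    (Polynomial.map_ne_zero_iff (algebraMap ℝ ℂ).injective).2 hp0
  have hz' : z ∈ (p.map (algebraMap ℝ ℂ)).roots := by
    rw [mem_roots hmap, IsRoot, eval_map, ← aeval_def]; exact hz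
  rw [← roots_map_of_injective_of_card_eq_natDegree (algebraMap ℝ ℂ).injective h] at hz'
  obtain ⟨x, -, rfl⟩ := Multiset.mem_map.1 hz'
  simp

theorem coeff_eq_leadingCoeff_mul_esymm_neg_roots {R : Type*} [CommRing R] [IsDomain R]
    {p : R[X]} (hroots : p.roots.card = p.natDegree) {k : ℕ} (hk : k ≤ p.natDegree) :
    p.coeff k = p.leadingCoeff * (p.roots.map Neg.neg).esymm (p.natDegree - k) := by
  rw [coeff_eq_esymm_roots_of_card hroots hk, Multiset.esymm_neg, mul_assoc]

theorem eval_pos_of_coeff_nonneg {R : Type*} [CommSemiring R] [PartialOrder R]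
    [IsStrictOrderedRing R] {p : R[X]} (hp : ∀ j, 0 ≤ p.coeff j) (h0 : 0 < p.coeff 0) {x : R}
    (hx : 0 ≤ x) :
    0 < p.eval x := by
  rw [eval_eq_sum_range]
  calc 0 < p.coeff 0 * x ^ 0 := by simpa using h0
    _ ≤ ∑ j ∈ Finset.range (p.natDegree + 1), p.coeff j * x ^ j :=
      Finset.single_le_sum (fun j _ => mul_nonneg (hp j) (pow_nonneg hx j)) (by simp)

theorem exists_isRoot_Ioo_of_alternating {p : ℝ[X]} {x y : ℝ} (hxy : x ≤ y) {j : ℕ}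
    (hx : 0 < (-1) ^ (j + 1) * p.eval x) (hy : 0 < (-1) ^ j * p.eval y) :
    ∃ r ∈ Set.Ioo x y, p.IsRoot r := by
  have hcont := p.continuous.continuousOn (s := Set.Icc x y)
  rcases neg_one_pow_eq_or ℝ j with h | h <;> rw [pow_succ, h] at hx <;> rw [h] at hy
  · exact intermediate_value_Ioo hxy hcont ⟨by linarith, by linarith⟩
  · exact intermediate_value_Ioo' hxy hcont ⟨by linarith, by linarith⟩

theorem le_card_roots_of_alternating {p : ℝ[X]} {x : ℕ → ℝ} (hx : StrictAnti x) {k : ℕ}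
    (h : ∀ j ≤ k, 0 < (-1) ^ j * p.eval (x j)) : k ≤ p.roots.card := by
  classical
  have hp0 : p ≠ 0 := by rintro rfl; simpa using h 0 (Nat.zero_le _)
  have hroot (j : Fin k) : ∃ r ∈ Set.Ioo (x (j + 1)) (x j), p.IsRoot r :=
    exists_isRoot_Ioo_of_alternating (hx (Nat.lt_succ_self j)).le (h _ (by omega)) (h _ (by omega))
  choose r hr hroot using hroot
  have hr_anti : StrictAnti r := fun i j hij => calc
    r j < x j := (hr j).2
    _ ≤ x (i + 1) := hx.antitone (Nat.succ_le_of_lt hij)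
    _ < r i := (hr i).1
  calc k = (Finset.univ.image r).card := by
        rw [Finset.card_image_of_injective _ hr_anti.injective, Finset.card_univ, Fintype.card_fin]
    _ ≤ p.roots.toFinset.card := Finset.card_le_card fun y hy => by
        obtain ⟨j, -, rfl⟩ := Finset.mem_image.1 hy
        exact Multiset.mem_toFinset.2 ((mem_roots hp0).2 (hroot j))
    _ ≤ p.roots.card := Multiset.toFinset_card_le _

theorem hyperbolic_of_alternating {p : ℝ[X]} {k : ℕ} (hk : p.natDegree ≤ k) {x : ℕ → ℝ}
    (hx : StrictAnti x) (h : ∀ j ≤ k, 0 < (-1) ^ j * p.eval (x j)) : Hyperbolic p := by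
  have hp0 : p ≠ 0 := by rintro rfl; simpa using h 0 (Nat.zero_le _)
  exact hyperbolic_of_card_roots hp0
    ((card_roots' p).antisymm (hk.trans (le_card_roots_of_alternating hx h)))

theorem coeff_sect (a : ℕ → ℝ) (i j : ℕ) :
    (sect a i).coeff j = if j ≤ i then a j else 0 := by
  simp [sect, finsetSum_coeff, coeff_C_mul, coeff_X_pow]

theorem natDegree_sect {a : ℕ → ℝ} {i : ℕ} (h : a i ≠ 0) : (sect a i).natDegree = i :=
  natDegree_eq_of_le_of_coeff_ne_zero
    (natDegree_le_iff_coeff_eq_zero.2 fun j hj => by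
      simp [coeff_sect, not_le.2 (by exact_mod_cast hj)])
    (by simpa [coeff_sect] using h)

theorem eval_sect (a : ℕ → ℝ) (i : ℕ) (x : ℝ) :
    (sect a i).eval x = ∑ l ∈ Finset.range (i + 1), a l * x ^ l := by
  simp [sect, eval_finsetSum]

theorem pow_mul_self_mul_inv_pow_mul_pow {q : ℝ} (hq : q ≠ 0) (j l : ℕ) :
    q ^ (l * l) * (q⁻¹ ^ (2 * j)) ^ l * q ^ (j * j) = q ^ (((l : ℤ) - j) ^ 2) := by
  rw [← pow_mul, inv_pow, ← zpow_natCast, ← zpow_natCast, ← zpow_natCast, ← zpow_neg,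
    ← zpow_add₀ hq, ← zpow_add₀ hq]
  congr 1
  push_cast
  ring

theorem neg_one_pow_mul_eval_sect_mul {q : ℝ} (hq : q ≠ 0) (j k : ℕ) :
    (-1) ^ j * (sect (fun l => q ^ (l * l)) k).eval (-(q⁻¹ ^ (2 * j))) * q ^ (j * j) =
      ∑ l ∈ Finset.range (k + 1), (-1) ^ (l + j) * q ^ (((l : ℤ) - j) ^ 2) := by
  rw [eval_sect, Finset.mul_sum, Finset.sum_mul]
  refine Finset.sum_congr rfl fun l _ => ?_
  rw [← pow_mul_self_mul_inv_pow_mul_pow hq, neg_pow, pow_add]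
  ring

theorem sum_neg_one_pow_mul_zpow_sq_pos {q : ℝ} (hq0 : 0 < q) (hq1 : q ≤ 1) {j k : ℕ}
    (hjk : j ≤ k) (hkq : k * q < 1) :
    0 < ∑ l ∈ Finset.range (k + 1), (-1) ^ (l + j) * q ^ (((l : ℤ) - j) ^ 2) := by
  have hfar : ∀ l ∈ (Finset.range (k + 1)).erase j,
      -q ≤ (-1) ^ (l + j) * q ^ (((l : ℤ) - j) ^ 2) := by
    intro l hl
    have hlj : (l : ℤ) - j ≠ 0 := sub_ne_zero.2 (by exact_mod_cast Finset.ne_of_mem_erase hl)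
    have hpow : q ^ (((l : ℤ) - j) ^ 2) ≤ q := by
      simpa using zpow_le_zpow_right_of_le_one₀ hq0 hq1
        ((one_le_sq_iff_one_le_abs _).2 (Int.one_le_abs hlj))
    rcases neg_one_pow_eq_or ℝ (l + j) with h | h <;> rw [h] <;>
      linarith [zpow_pos hq0 (((l : ℤ) - j) ^ 2)]
  have hj : j ∈ Finset.range (k + 1) := Finset.mem_range.2 (by omega)
  have hrest := Finset.card_nsmul_le_sum _ _ _ hfar
  rw [Finset.card_erase_of_mem hj, Finset.card_range, nsmul_eq_mul] at hrest
  rw [← Finset.add_sum_erase _ _ hj, sub_self, ← two_mul, pow_mul]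
  push_cast at hrest
  norm_num
  linarith

theorem hyperbolic_sect_pow_mul_self {q : ℝ} (hq0 : 0 < q) (hq1 : q < 1) {k : ℕ}
    (hkq : k * q < 1) : Hyperbolic (sect (fun l => q ^ (l * l)) k) := by
  have hx : StrictAnti fun j : ℕ => -(q⁻¹ ^ (2 * j)) :=
    StrictMono.neg fun i j hij => pow_lt_pow_right₀ ((one_lt_inv₀ hq0).2 hq1) (by omega)
  have hdeg : (sect (fun l => q ^ (l * l)) k).natDegree ≤ k := by
    apply (natDegree_sect _).le
    exact (pow_pos hq0 _).ne'
  refine hyperbolic_of_alternating hdeg hx fun j hj => ?_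
  have := sum_neg_one_pow_mul_zpow_sq_pos hq0 hq1.le hj hkq
  rw [← neg_one_pow_mul_eval_sect_mul hq0.ne'] at this
  exact pos_of_mul_pos_left this (pow_pos hq0 _).le

namespace SectionHyperbolic

variable {a : ℕ → ℝ} {n : ℕ}

/-- `t` is the multiset of negated roots of `sect a d`. -/
theorem exists_esymm (hsh : SectionHyperbolic a n) {d : ℕ} (hd : 1 ≤ d) (hdn : d ≤ n) :
    ∃ t : Multiset ℝ, Multiset.card t = d ∧ (∀ x ∈ t, 0 ≤ x) ∧
      ∀ k ≤ d, a (d - k) = a d * t.esymm k := by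
  have hdeg : (sect a d).natDegree = d := natDegree_sect (hsh.1 d hdn).ne'
  have hroots := (hsh.2 d hd hdn).card_roots
  refine ⟨(sect a d).roots.map Neg.neg, by rw [Multiset.card_map, hroots, hdeg], ?_, ?_⟩
  · have hcoeff (j : ℕ) : 0 ≤ (sect a d).coeff j := by
      rw [coeff_sect]; split_ifs with hj
      exacts [(hsh.1 j (hj.trans hdn)).le, le_rfl]
    intro x hx
    obtain ⟨r, hr, rfl⟩ := Multiset.mem_map.1 hx
    have hr0 : ¬ 0 ≤ r := fun h => (eval_pos_of_coeff_nonneg hcoeff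
      (by simpa [coeff_sect] using hsh.1 0 (Nat.zero_le n)) h).ne' (isRoot_of_mem_roots hr)
    linarith
  · intro k hk
    have := coeff_eq_leadingCoeff_mul_esymm_neg_roots hroots (k := d - k) (by omega)
    rwa [leadingCoeff, hdeg, coeff_sect, coeff_sect, if_pos (by omega), if_pos le_rfl,
      Nat.sub_sub_self hk] at this

theorem three_mul_le_sq (hsh : SectionHyperbolic a n) {i : ℕ} (hi : 1 ≤ i) (hin : i + 1 ≤ n) :
    3 * (a (i - 1) * a (i + 1)) ≤ a i ^ 2 := by
  induction i using Nat.strong_induction_on with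
  | _ i ih =>
  obtain ⟨t, hcard, ht, hcoeff⟩ := hsh.exists_esymm (d := i + 1) (by omega) hin
  have hL : 0 < a (i + 1) := hsh.1 _ hin
  have h1 : a i = a (i + 1) * t.esymm 1 := by simpa using hcoeff 1
  have h2 : a (i - 1) = a (i + 1) * t.esymm 2 := by simpa using hcoeff 2 (by omega)
  have h13 : 3 * (t.esymm 1 * t.esymm 3) ≤ t.esymm 2 ^ 2 := by
    rcases (show i = 1 ∨ 2 ≤ i by omega) with rfl | hi2
    · rw [Multiset.esymm_of_card_lt (by omega : Multiset.card t < 3), mul_zero, mul_zero]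
      positivity
    · have h3 : a (i - 2) = a (i + 1) * t.esymm 3 := by
        simpa [show i + 1 - 3 = i - 2 by omega] using hcoeff 3 (by omega)
      have := ih (i - 1) (by omega) (by omega) (by omega)
      rw [show i - 1 - 1 = i - 2 by omega, show i - 1 + 1 = i by omega, h1, h2, h3] at this
      exact le_of_mul_le_mul_left (by linarith) (pow_pos hL 2)
  have := Multiset.three_mul_esymm_two_le ht h13
  rw [h1, h2]
  nlinarith [pow_pos hL 2]

end SectionHyperbolic

theorem exists_sectionHyperbolic (n : ℕ) : ∃ a : ℕ → ℝ, SectionHyperbolic a n := by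
  set q : ℝ := ((n : ℝ) + 2)⁻¹
  have hq0 : 0 < q := by positivity
  refine ⟨fun l => q ^ (l * l), fun _ _ => pow_pos hq0 _, fun k _ hkn => ?_⟩
  apply hyperbolic_sect_pow_mul_self hq0
  · exact inv_lt_one_of_one_lt₀ (by linarith)
  · have hk : (k : ℝ) ≤ n := by exact_mod_cast hkn
    rw [← div_eq_mul_inv, div_lt_one (by positivity)]
    linarith

theorem stmt0 :
    (∀ (n : ℕ) (a : ℕ → ℝ), SectionHyperbolic a n →
      ∀ i, 1 ≤ i → i ≤ n - 1 → a i ^ 2 ≥ 3 * (a (i - 1) * a (i + 1))) ∧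
    (∀ i : ℕ, 1 ≤ i →
      3 ≤ sInf {r : ℝ | ∃ (n : ℕ) (a : ℕ → ℝ), i + 1 ≤ n ∧ SectionHyperbolic a n ∧
        r = a i ^ 2 / (a (i - 1) * a (i + 1))}) := by
  refine ⟨fun n a hsh i hi hin => hsh.three_mul_le_sq hi (by omega), fun i hi => ?_⟩
  obtain ⟨a, ha⟩ := exists_sectionHyperbolic (i + 1)
  refine le_csInf ⟨_, i + 1, a, le_rfl, ha, rfl⟩ ?_
  rintro r ⟨n, a, hn, hsh, rfl⟩
  rw [le_div_iff₀ (mul_pos (hsh.1 _ (by omega)) (hsh.1 _ hn))]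
  exact hsh.three_mul_le_sq hi hn
end

section
/- Let q̂ ∈ ℂ with 0 < |q̂| < 1 and û ∈ ℂ with û ≠ 0. There exist r > 1 and a function V, analytic on the closed disk {x : |x| ≤ r}, with V(0) = 1, satisfying V(x) = −û·q̂·(x·V(q̂·x) + V(−q̂)) for all |x| ≤ r and V′(−1) = 0, if and only if the pair (q̂, û) is critical for the partial theta function, i.e. Ψ(q̂, û) = 0 and ∂Ψ/∂u(q̂, û) = 0 (û is a double root of u ↦ Ψ(q̂,u)). In this case V(x) = Ψ(q̂, −û·x). -/
open Filter

/-- The partial theta function `Ψ(q,u) = Σ_{j≥0} q^{j(j+1)/2} u^j` for complex arguments. -/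
noncomputable def PsiCC (q u : ℂ) : ℂ :=
  ∑' j : ℕ, q ^ (j * (j + 1) / 2) * u ^ j

lemma psi_coeff_succ (q : ℂ) (j : ℕ) :
    q ^ ((j + 1) * (j + 2) / 2) = q ^ (j * (j + 1) / 2) * q ^ (j + 1) := by
  rw [← pow_add]
  congr 1
  have h : (j + 1) * (j + 2) = j * (j + 1) + (j + 1) * 2 := by ring
  rw [h, Nat.add_mul_div_right _ _ (by norm_num : (0:ℕ) < 2)]

lemma psi_summable (q : ℂ) (hq1 : ‖q‖ < 1) (z : ℂ) :
    Summable (fun j : ℕ => q ^ (j * (j + 1) / 2) * z ^ j) := by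
  apply summable_of_ratio_norm_eventually_le (r := 1/2) (by norm_num)
  have h0 : Filter.Tendsto (fun j : ℕ => ‖q‖ ^ (j + 1) * ‖z‖) atTop (nhds 0) := by
    have := (tendsto_pow_atTop_nhds_zero_of_lt_one (norm_nonneg q) hq1).comp
      (tendsto_add_atTop_nat 1)
    simpa using this.mul_const ‖z‖
  filter_upwards [h0.eventually (eventually_le_nhds (by norm_num : (0:ℝ) < 1/2))] with j hj
  have : ‖q ^ ((j + 1) * (j + 2) / 2) * z ^ (j + 1)‖
      = (‖q‖ ^ (j + 1) * ‖z‖) * ‖q ^ (j * (j + 1) / 2) * z ^ j‖ := by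
    rw [psi_coeff_succ, pow_succ]
    simp [norm_mul, norm_pow]
    ring
  rw [this]
  exact mul_le_mul_of_nonneg_right hj (norm_nonneg _)

lemma psi_differentiable (q : ℂ) (hq1 : ‖q‖ < 1) :
    Differentiable ℂ (fun w => PsiCC q w) := by
  intro w
  set R : ℝ := ‖w‖ + 1 with hR
  have hR0 : (0:ℝ) ≤ R := by positivity
  have hdiff : DifferentiableOn ℂ (fun w => PsiCC q w) (Metric.ball (0:ℂ) R) := by
    apply Complex.differentiableOn_tsum_of_summable_norm
      (u := fun j : ℕ => ‖q ^ (j * (j + 1) / 2) * (R:ℂ) ^ j‖)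
      ((psi_summable q hq1 (R:ℂ)).norm)
      (fun j => (differentiable_const _ |>.mul (differentiable_pow j)).differentiableOn)
      Metric.isOpen_ball
    intro j x hx
    have hxR : ‖x‖ ≤ R := by
      have := Metric.mem_ball.mp hx
      simpa [dist_eq_norm] using this.le
    simp only [norm_mul, norm_pow, Complex.norm_real, Real.norm_eq_abs, abs_of_nonneg hR0]
    exact mul_le_mul_of_nonneg_left (pow_le_pow_left₀ (norm_nonneg x) hxR j) (by positivity)
  exact hdiff.differentiableAt (Metric.isOpen_ball.mem_nhds (by
    simp only [Metric.mem_ball, dist_zero_right]; linarith))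

lemma psi_zero (q : ℂ) : PsiCC q 0 = 1 := by
  rw [PsiCC, tsum_eq_single 0]
  · simp
  · intro j hj; simp [zero_pow hj]

lemma psi_fe (q : ℂ) (hq1 : ‖q‖ < 1) (w : ℂ) :
    PsiCC q w = 1 + q * w * PsiCC q (q * w) := by
  have hs := psi_summable q hq1 w
  rw [PsiCC, Summable.tsum_eq_zero_add hs]
  have h0 : q ^ (0 * (0 + 1) / 2) * w ^ 0 = 1 := by norm_num
  rw [h0]
  congr 1
  rw [PsiCC, ← tsum_mul_left]
  congr 1 with j
  rw [show (j + 1) * (j + 1 + 1) / 2 = (j + 1) * (j + 2) / 2 from rfl, psi_coeff_succ, mul_pow]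
  ring

lemma aux_tendsto (c a : ℝ) (hc : 0 ≤ c) (ha0 : 0 ≤ a) (ha : a < 1) :
    Filter.Tendsto (fun n : ℕ => c ^ n * a ^ (n * (n - 1) / 2)) atTop (nhds 0) := by
  -- choose k with c * a^k < 1/2
  have h0 : Filter.Tendsto (fun k : ℕ => c * a ^ k) atTop (nhds 0) := by
    simpa using (tendsto_pow_atTop_nhds_zero_of_lt_one ha0 ha).const_mul c
  obtain ⟨k, hk⟩ := ((h0.eventually (eventually_le_nhds (by norm_num : (0:ℝ) < 1/2)))).exists
  apply squeeze_zero' (g := fun n : ℕ => (1/2 : ℝ) ^ n)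
  · exact Filter.Eventually.of_forall fun n => by positivity
  · filter_upwards [eventually_ge_atTop (2 * k + 1)] with n hn
    have hkn : k ≤ (n - 1) / 2 := by omega
    have hdiv : n * k ≤ n * (n - 1) / 2 :=
      le_trans (Nat.mul_le_mul_left n hkn) (Nat.mul_div_le_mul_div_assoc n (n-1) 2)
    have h1 : a ^ (n * (n - 1) / 2) ≤ a ^ (n * k) :=
      pow_le_pow_of_le_one ha0 ha.le hdiv
    calc c ^ n * a ^ (n * (n - 1) / 2) ≤ c ^ n * a ^ (n * k) := by
          exact mul_le_mul_of_nonneg_left h1 (by positivity)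
      _ = (c * a ^ k) ^ n := by rw [mul_pow, ← pow_mul, Nat.mul_comm k n]
      _ ≤ (1/2 : ℝ) ^ n := by
          apply pow_le_pow_left₀ (by positivity) hk
  · exact tendsto_pow_atTop_nhds_zero_of_lt_one (by norm_num) (by norm_num)

lemma key_uniq (q u : ℂ) (hq1 : ‖q‖ < 1) (r : ℝ) (hr : 1 < r) (W : ℂ → ℂ)
    (hWc : ContinuousOn W (Metric.closedBall 0 r))
    (hW : ∀ x : ℂ, ‖x‖ ≤ r → W x = -u * q * x * W (q * x)) :
    ∀ x : ℂ, ‖x‖ ≤ r → W x = 0 := by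
  obtain ⟨M, hM⟩ := (isCompact_closedBall (0:ℂ) r).exists_bound_of_continuousOn hWc
  have hM0 : 0 ≤ M := by
    have := hM 0 (by simp; linarith)
    exact le_trans (norm_nonneg _) this
  have hqx : ∀ x : ℂ, ‖x‖ ≤ r → ‖q * x‖ ≤ r := by
    intro x hx
    rw [norm_mul]
    calc ‖q‖ * ‖x‖ ≤ 1 * r := by
          apply mul_le_mul hq1.le hx (norm_nonneg _) (by norm_num)
      _ = r := one_mul r
  have key : ∀ n : ℕ, ∀ x : ℂ, ‖x‖ ≤ r →
      W x = (-u * q) ^ n * q ^ (n * (n - 1) / 2) * x ^ n * W (q ^ n * x) := by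
    intro n
    induction n with
    | zero => intro x _; simp
    | succ m ih =>
      intro x hx
      rw [hW x hx, ih (q * x) (hqx x hx)]
      have harg : q ^ m * (q * x) = q ^ (m + 1) * x := by ring
      rw [harg]
      have hexp : (m + 1) * (m + 1 - 1) / 2 = m * (m - 1) / 2 + m := by
        cases m with
        | zero => rfl
        | succ j =>
          simp only [Nat.add_sub_cancel]
          have h : (j + 2) * (j + 1) = (j + 1) * j + (j + 1) * 2 := by ring
          rw [h, Nat.add_mul_div_right _ _ (by norm_num : (0:ℕ) < 2)]
      rw [hexp, pow_add, pow_add]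
      ring
  intro x hx
  have hb : ∀ n : ℕ, ‖W x‖ ≤ (‖u‖ * ‖q‖ * r) ^ n * ‖q‖ ^ (n * (n - 1) / 2) * M := by
    intro n
    rw [key n x hx]
    have hWb : ‖W (q ^ n * x)‖ ≤ M := by
      apply hM
      simp only [Metric.mem_closedBall, dist_zero_right]
      calc ‖q ^ n * x‖ = ‖q‖ ^ n * ‖x‖ := by rw [norm_mul, norm_pow]
        _ ≤ 1 * r := by
            apply mul_le_mul _ hx (norm_nonneg _) (by norm_num)
            exact pow_le_one₀ (norm_nonneg _) hq1.le
        _ = r := one_mul r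
    calc ‖(-u * q) ^ n * q ^ (n * (n - 1) / 2) * x ^ n * W (q ^ n * x)‖
        = (‖u‖ * ‖q‖) ^ n * ‖q‖ ^ (n * (n - 1) / 2) * ‖x‖ ^ n * ‖W (q ^ n * x)‖ := by
          simp [norm_mul, norm_pow]
      _ ≤ (‖u‖ * ‖q‖) ^ n * ‖q‖ ^ (n * (n - 1) / 2) * r ^ n * M := by
          apply mul_le_mul _ hWb (norm_nonneg _) (by positivity)
          apply mul_le_mul_of_nonneg_left (pow_le_pow_left₀ (norm_nonneg x) hx n) (by positivity)
      _ = (‖u‖ * ‖q‖ * r) ^ n * ‖q‖ ^ (n * (n - 1) / 2) * M := by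
          rw [mul_pow (‖u‖ * ‖q‖) r]
          ring
  have htend : Filter.Tendsto
      (fun n : ℕ => (‖u‖ * ‖q‖ * r) ^ n * ‖q‖ ^ (n * (n - 1) / 2) * M) atTop (nhds 0) := by
    have := (aux_tendsto (‖u‖ * ‖q‖ * r) ‖q‖ (by positivity; ) (norm_nonneg q) hq1).mul_const M
    · simpa using this
  have : ‖W x‖ ≤ 0 := ge_of_tendsto htend (Filter.Eventually.of_forall hb)
  exact norm_le_zero_iff.mp this

lemma psi_fe' (q u : ℂ) (hq1 : ‖q‖ < 1) (x : ℂ) :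
    PsiCC q (-u * x) = 1 + (-u * q) * x * PsiCC q (-u * (q * x)) := by
  have h := psi_fe q hq1 (-u * x)
  rw [h, show q * (-u * x) = -u * (q * x) by ring]
  ring

lemma deriv_P (q u : ℂ) (hq1 : ‖q‖ < 1) :
    deriv (fun x : ℂ => PsiCC q (-u * x)) (-1) = deriv (fun w : ℂ => PsiCC q w) u * (-u) := by
  set d := deriv (fun w : ℂ => PsiCC q w) u with hd
  have h1 : HasDerivAt (fun w : ℂ => PsiCC q w) d u :=
    (psi_differentiable q hq1 u).hasDerivAt
  have h1' : HasDerivAt (fun w : ℂ => PsiCC q w) d (-u * (-1)) := by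
    rwa [show -u * (-1 : ℂ) = u by ring]
  have h2 : HasDerivAt (fun x : ℂ => -u * x) (-u) (-1) := by
    simpa using (hasDerivAt_id (-1 : ℂ)).const_mul (-u)
  have := h1'.comp (-1) h2
  exact this.deriv

/-- For `0 < |q̂| < 1` and `û ≠ 0`: there exist `r > 1` and `V` analytic on the closed disk of
radius `r`, with `V(0) = 1`, satisfying `V(x) = -û q̂ (x V(q̂ x) + V(-q̂))` on the disk and
`V'(-1) = 0`, if and only if `(q̂,û)` is a critical pair of the partial theta function, i.e.
`Ψ(q̂,û) = 0` and `∂Ψ/∂u(q̂,û) = 0`.  Moreover, in this case any such `V` is given by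
`V(x) = Ψ(q̂, -û x)`. -/
theorem stmt15 (q u : ℂ) (hq0 : q ≠ 0) (hq1 : ‖q‖ < 1) (hu : u ≠ 0) :
    ((∃ r : ℝ, 1 < r ∧ ∃ V : ℂ → ℂ,
        AnalyticOnNhd ℂ V (Metric.closedBall 0 r) ∧ V 0 = 1 ∧
        (∀ x : ℂ, ‖x‖ ≤ r → V x = -u * q * (x * V (q * x) + V (-q))) ∧
        deriv V (-1) = 0) ↔
      (PsiCC q u = 0 ∧ deriv (fun w : ℂ => PsiCC q w) u = 0)) ∧
    (∀ r : ℝ, 1 < r → ∀ V : ℂ → ℂ,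
        AnalyticOnNhd ℂ V (Metric.closedBall 0 r) → V 0 = 1 →
        (∀ x : ℂ, ‖x‖ ≤ r → V x = -u * q * (x * V (q * x) + V (-q))) →
        deriv V (-1) = 0 →
        ∀ x : ℂ, ‖x‖ ≤ r → V x = PsiCC q (-u * x)) := by
  -- the candidate solution
  set P : ℂ → ℂ := fun x => PsiCC q (-u * x) with hP
  have hPdiff : Differentiable ℂ P := by
    apply (psi_differentiable q hq1).comp
    exact (differentiable_const (-u)).mul differentiable_id
  -- uniqueness: any solution of the recursion equals P
  have main : ∀ r : ℝ, 1 < r → ∀ V : ℂ → ℂ,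
      AnalyticOnNhd ℂ V (Metric.closedBall 0 r) → V 0 = 1 →
      (∀ x : ℂ, ‖x‖ ≤ r → V x = -u * q * (x * V (q * x) + V (-q))) →
      ∀ x : ℂ, ‖x‖ ≤ r → V x = PsiCC q (-u * x) := by
    intro r hr V hVa hV0 hVfe
    have hr0 : (0:ℝ) ≤ r := by linarith
    have h0r : ‖(0:ℂ)‖ ≤ r := by simp [hr0]
    have h1 : -u * q * V (-q) = 1 := by
      have := hVfe 0 h0r
      rw [hV0] at this
      rw [show -u * q * (0 * V (q * 0) + V (-q)) = -u * q * V (-q) by ring] at this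
      exact this.symm
    have hV' : ∀ x : ℂ, ‖x‖ ≤ r → V x = 1 + (-u * q) * x * V (q * x) := by
      intro x hx
      rw [hVfe x hx]
      linear_combination h1
    set W : ℂ → ℂ := fun x => V x - P x with hW
    have hWfe : ∀ x : ℂ, ‖x‖ ≤ r → W x = -u * q * x * W (q * x) := by
      intro x hx
      simp only [hW, hP]
      linear_combination (hV' x hx) - (psi_fe' q u hq1 x)
    have hWc : ContinuousOn W (Metric.closedBall 0 r) :=
      (hVa.continuousOn).sub (hPdiff.continuous.continuousOn)
    intro x hx
    have := key_uniq q u hq1 r hr W hWc hWfe x hx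
    have : V x - P x = 0 := this
    have := sub_eq_zero.mp this
    simpa [hP] using this
  constructor
  · constructor
    · -- existence implies criticality
      rintro ⟨r, hr, V, hVa, hV0, hVfe, hVd⟩
      have hVP := main r hr V hVa hV0 hVfe
      have hr0 : (0:ℝ) ≤ r := by linarith
      have h0r : ‖(0:ℂ)‖ ≤ r := by simp [hr0]
      have h1 : -u * q * V (-q) = 1 := by
        have := hVfe 0 h0r
        rw [hV0] at this
        rw [show -u * q * (0 * V (q * 0) + V (-q)) = -u * q * V (-q) by ring] at this
        exact this.symm
      have hqr : ‖(-q : ℂ)‖ ≤ r := by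
        rw [norm_neg]; linarith
      have hVq : V (-q) = PsiCC q (-u * -q) := hVP (-q) hqr
      have hPsi0 : PsiCC q u = 0 := by
        have h1' : -u * q * PsiCC q (-u * -q) = 1 := by rw [← hVq]; exact h1
        have hfe := psi_fe q hq1 u
        rw [show q * u = -u * -q by ring] at hfe
        linear_combination hfe - h1'
      constructor
      · exact hPsi0
      · -- derivative condition
        have hVPe : V =ᶠ[nhds (-1 : ℂ)] P := by
          have hmem : Metric.ball (0:ℂ) r ∈ nhds (-1 : ℂ) := by
            apply Metric.isOpen_ball.mem_nhds
            simp only [Metric.mem_ball, dist_zero_right, norm_neg, norm_one]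
            exact hr
          filter_upwards [hmem] with y hy
          apply hVP
          simp only [Metric.mem_ball, dist_zero_right] at hy
          exact hy.le
        have hde : deriv V (-1) = deriv P (-1) := Filter.EventuallyEq.deriv_eq hVPe
        have hdP := deriv_P q u hq1
        have : deriv (fun w : ℂ => PsiCC q w) u * (-u) = 0 := by
          rw [← hdP, ← hde, hVd]
        rcases mul_eq_zero.mp this with h | h
        · exact h
        · exact absurd (neg_eq_zero.mp h) hu
    · -- criticality implies existence
      rintro ⟨hc1, hc2⟩
      refine ⟨2, by norm_num, P, ?_, ?_, ?_, ?_⟩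
      · have : DifferentiableOn ℂ P (Metric.ball (0:ℂ) 3) := hPdiff.differentiableOn
        have := this.analyticOnNhd Metric.isOpen_ball
        apply this.mono
        intro x hx
        simp only [Metric.mem_closedBall, dist_zero_right] at hx
        simp only [Metric.mem_ball, dist_zero_right]
        linarith
      · simp only [hP, mul_zero, psi_zero]
      · intro x hx
        have hfe := psi_fe' q u hq1 x
        have hq2 : ‖(-q : ℂ)‖ ≤ (2:ℝ) := by rw [norm_neg]; linarith
        -- need: -u*q*P(-q) = 1
        have hPq : -u * q * P (-q) = 1 := by
          have hfeu := psi_fe q hq1 u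
          rw [hc1] at hfeu
          have : q * u * PsiCC q (q * u) = -1 := by linear_combination - hfeu
          simp only [hP]
          rw [show -u * (-q : ℂ) = q * u by ring]
          linear_combination - this
        simp only [hP] at hfe hPq ⊢
        rw [hfe]
        linear_combination - hPq
      · have hdP := deriv_P q u hq1
        simp only [hP]
        rw [hdP, hc2, zero_mul]
  · intro r hr V hVa hV0 hVfe _
    exact main r hr V hVa hV0 hVfe
end

section
/- For every n ≥ 2 and every k with 1 ≤ k ≤ n−1, there exists a monic real polynomial p(x) = x^n + a_{n−1}x^{n−1} + ... + a_0 (with a_n = 1) having all coefficients a_i > 0 and at least one non-real root, such that a_i^2 ≥ 4·a_{i−1}·a_{i+1} for every i ∈ {1, ..., n−1} with i ≠ k, while a_k^2 < 4·a_{k−1}·a_{k+1}. -/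
open Polynomial

noncomputable section

def st18M (n k : ℕ) : ℤ := 2*((n:ℤ)-k)-1

def st18G (n k : ℕ) (j : ℕ) : ℤ :=
  if j < k then -(((n:ℤ)-j)*((n:ℤ)-j-1)) + 2*st18M n k
  else -(((n:ℤ)-j-2)*((n:ℤ)-j-3))

def st18H (n k : ℕ) (i : ℕ) : ℤ :=
  -(((n:ℤ)-i)*((n:ℤ)-i-1)) - (if i = k then 1 else 0)

def st18Q (n k : ℕ) : Polynomial ℝ :=
  ∑ j ∈ Finset.range (n-1), C ((10:ℝ)^(st18G n k j)) * X^j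

def st18P (n k : ℕ) : Polynomial ℝ :=
  st18Q n k * X^2 + C ((10:ℝ)^(-st18M n k)) * (st18Q n k * X)
    + C ((10:ℝ)^(-(2*st18M n k))) * st18Q n k

lemma st18Q_coeff (n k i : ℕ) :
    (st18Q n k).coeff i = if i < n-1 then (10:ℝ)^(st18G n k i) else 0 := by
  rw [st18Q, finset_sum_coeff]
  simp only [coeff_C_mul, coeff_X_pow, mul_ite, mul_one, mul_zero]
  simp [Finset.sum_ite_eq, Finset.mem_range]

lemma st18P_coeff (n k i : ℕ) :
    (st18P n k).coeff i =
      (if 2 ≤ i ∧ i-2 < n-1 then (10:ℝ)^(st18G n k (i-2)) else 0)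
    + (if 1 ≤ i ∧ i-1 < n-1 then (10:ℝ)^(-st18M n k + st18G n k (i-1)) else 0)
    + (if i < n-1 then (10:ℝ)^(-(2*st18M n k) + st18G n k i) else 0) := by
  have h10 : (10:ℝ) ≠ 0 := by norm_num
  rw [st18P, coeff_add, coeff_add, coeff_C_mul, coeff_C_mul,
    coeff_mul_X_pow',
    show (X : ℝ[X]) = X^1 from (pow_one _).symm, coeff_mul_X_pow', st18Q_coeff, st18Q_coeff, st18Q_coeff]
  split_ifs <;> simp_all [zpow_add₀ h10] <;> ring_nf <;> omega

lemma st18_zpow_le {a b : ℤ} (h : a ≤ b) : (10:ℝ)^a ≤ (10:ℝ)^b :=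
  zpow_le_zpow_right₀ (by norm_num) h

lemma st18_zpow_pos (a : ℤ) : (0:ℝ) < (10:ℝ)^a := by positivity

-- exponent bounds: each term's exponent ≤ H i
lemma st18_expA (n k i : ℕ) (hk1 : 1 ≤ k) (hk2 : k ≤ n-1) (h2 : 2 ≤ i) (hi : i ≤ n) :
    st18G n k (i-2) ≤ st18H n k i := by
  have hn : 2 ≤ n := by omega
  have hc : ((i-2 : ℕ) : ℤ) = (i:ℤ) - 2 := by omega
  rw [st18G, st18H, st18M]
  split_ifs with h1 h3 h3
  · have : (i:ℤ) ≤ (k:ℤ) + 1 := by omega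
    have hkk : (k:ℤ) ≤ (n:ℤ) - 1 := by omega
    rw [hc]; nlinarith
  · have : (i:ℤ) ≤ (k:ℤ) + 1 := by omega
    have : (i:ℤ) ≠ (k:ℤ) := by omega
    have hkk : (k:ℤ) ≤ (n:ℤ) - 1 := by omega
    rw [hc]; nlinarith
  · omega
  · have : (k:ℤ) ≤ (i:ℤ) - 2 := by omega
    rw [hc]; nlinarith

lemma st18_expB (n k i : ℕ) (hk1 : 1 ≤ k) (hk2 : k ≤ n-1) (h1 : 1 ≤ i) (hi : i ≤ n) :
    -st18M n k + st18G n k (i-1) ≤ st18H n k i := by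
  have hc : ((i-1 : ℕ) : ℤ) = (i:ℤ) - 1 := by omega
  rw [st18G, st18H, st18M]
  split_ifs with h2 h3 h3
  · have : (i:ℤ) ≤ (k:ℤ) := by omega
    rw [hc]; nlinarith
  · have : (i:ℤ) ≤ (k:ℤ) - 1 := by omega
    rw [hc]; nlinarith
  · omega
  · have : (k:ℤ) + 1 ≤ (i:ℤ) := by omega
    rw [hc]; nlinarith

lemma st18_expC (n k i : ℕ) (hk1 : 1 ≤ k) (hk2 : k ≤ n-1) (hi : i ≤ n) :
    -(2*st18M n k) + st18G n k i ≤ st18H n k i := by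
  rw [st18G, st18H, st18M]
  split_ifs with h2 h3 h3
  · nlinarith
  · omega
  · have : (i:ℤ) = (k:ℤ) := by omega
    nlinarith
  · have : (k:ℤ) + 1 ≤ (i:ℤ) := by omega
    nlinarith

lemma st18_ite_nonneg (c : Prop) [Decidable c] (e : ℤ) :
    (0:ℝ) ≤ if c then (10:ℝ)^e else 0 := by
  split_ifs
  · exact le_of_lt (st18_zpow_pos e)
  · exact le_refl 0

lemma st18_low (n k : ℕ) (hn : 2 ≤ n) (hk1 : 1 ≤ k) (hk2 : k ≤ n-1) (i : ℕ) (hi : i ≤ n) :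
    (10:ℝ)^(st18H n k i) ≤ (st18P n k).coeff i := by
  rw [st18P_coeff]
  rcases lt_trichotomy i k with h|h|h
  · -- dominant: third term
    have hcond : i < n-1 := by omega
    have he : -(2*st18M n k) + st18G n k i = st18H n k i := by
      rw [st18G, if_pos h, st18H, if_neg (by omega), st18M]; ring
    rw [if_pos hcond, he]
    nlinarith [st18_ite_nonneg (2 ≤ i ∧ i-2 < n-1) (st18G n k (i-2)),
      st18_ite_nonneg (1 ≤ i ∧ i-1 < n-1) (-st18M n k + st18G n k (i-1))]
  · -- dominant: second term (i = k)
    subst h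
    have hcond : 1 ≤ i ∧ i-1 < n-1 := by omega
    have hc : ((i-1 : ℕ) : ℤ) = (i:ℤ) - 1 := by omega
    have he : -st18M n i + st18G n i (i-1) = st18H n i i := by
      rw [st18G, if_pos (by omega : i-1 < i), st18H, if_pos rfl, st18M, hc]; push_cast; ring
    rw [if_pos hcond, he]
    nlinarith [st18_ite_nonneg (2 ≤ i ∧ i-2 < n-1) (st18G n i (i-2)),
      st18_ite_nonneg (i < n-1) (-(2*st18M n i) + st18G n i i)]
  · -- dominant: first term (i > k)
    have hcond : 2 ≤ i ∧ i-2 < n-1 := by omega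
    have hc : ((i-2 : ℕ) : ℤ) = (i:ℤ) - 2 := by omega
    have he : st18G n k (i-2) = st18H n k i := by
      rw [st18G, st18H, if_neg (by omega : ¬ i = k), st18M]
      split_ifs with hb
      · have : (i:ℤ) = (k:ℤ) + 1 := by omega
        rw [hc]; nlinarith
      · rw [hc]; ring
    rw [if_pos hcond, he]
    nlinarith [st18_ite_nonneg (1 ≤ i ∧ i-1 < n-1) (-st18M n k + st18G n k (i-1)),
      st18_ite_nonneg (i < n-1) (-(2*st18M n k) + st18G n k i)]

lemma st18_up (n k : ℕ) (hn : 2 ≤ n) (hk1 : 1 ≤ k) (hk2 : k ≤ n-1) (i : ℕ) (hi : i ≤ n) :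
    (st18P n k).coeff i ≤ 3 * (10:ℝ)^(st18H n k i) := by
  rw [st18P_coeff]
  have hA : (if 2 ≤ i ∧ i-2 < n-1 then (10:ℝ)^(st18G n k (i-2)) else 0)
      ≤ (10:ℝ)^(st18H n k i) := by
    split_ifs with h
    · exact st18_zpow_le (st18_expA n k i hk1 hk2 h.1 hi)
    · exact le_of_lt (st18_zpow_pos _)
  have hB : (if 1 ≤ i ∧ i-1 < n-1 then (10:ℝ)^(-st18M n k + st18G n k (i-1)) else 0)
      ≤ (10:ℝ)^(st18H n k i) := by
    split_ifs with h
    · exact st18_zpow_le (st18_expB n k i hk1 hk2 h.1 hi)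
    · exact le_of_lt (st18_zpow_pos _)
  have hC : (if i < n-1 then (10:ℝ)^(-(2*st18M n k) + st18G n k i) else 0)
      ≤ (10:ℝ)^(st18H n k i) := by
    split_ifs with h
    · exact st18_zpow_le (st18_expC n k i hk1 hk2 hi)
    · exact le_of_lt (st18_zpow_pos _)
  linarith

lemma st18_upk (n k : ℕ) (hn : 2 ≤ n) (hk1 : 1 ≤ k) (hk2 : k ≤ n-1) :
    (st18P n k).coeff k ≤ (3/2) * (10:ℝ)^(st18H n k k) := by
  rw [st18P_coeff]
  have hA : (if 2 ≤ k ∧ k-2 < n-1 then (10:ℝ)^(st18G n k (k-2)) else 0)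
      ≤ (10:ℝ)^(st18H n k k - 3) := by
    split_ifs with h
    · apply st18_zpow_le
      have hc : ((k-2 : ℕ) : ℤ) = (k:ℤ) - 2 := by omega
      rw [st18G, if_pos (by omega : k-2 < k), st18H, if_pos rfl, st18M, hc]; nlinarith
    · exact le_of_lt (st18_zpow_pos _)
  have hB : (if 1 ≤ k ∧ k-1 < n-1 then (10:ℝ)^(-st18M n k + st18G n k (k-1)) else 0)
      ≤ (10:ℝ)^(st18H n k k) := by
    split_ifs with h
    · exact st18_zpow_le (st18_expB n k k hk1 hk2 h.1 (by omega))
    · exact le_of_lt (st18_zpow_pos _)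
  have hC : (if k < n-1 then (10:ℝ)^(-(2*st18M n k) + st18G n k k) else 0)
      ≤ (10:ℝ)^(st18H n k k - 3) := by
    split_ifs with h
    · apply st18_zpow_le
      rw [st18G, if_neg (by omega : ¬ k < k), st18H, if_pos rfl, st18M]; nlinarith
    · exact le_of_lt (st18_zpow_pos _)
  have h3 : (10:ℝ)^(st18H n k k - 3) = (10:ℝ)^(st18H n k k) / 1000 := by
    rw [zpow_sub₀ (by norm_num : (10:ℝ) ≠ 0)]; norm_num
  have hp := st18_zpow_pos (st18H n k k)
  rw [h3] at hA hC
  linarith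

lemma st18_gap (n k : ℕ) (hk1 : 1 ≤ k) (hk2 : k ≤ n-1) (i : ℕ)
    (h1 : 1 ≤ i) (h2 : i ≤ n-1) (hik : i ≠ k) :
    st18H n k (i-1) + st18H n k (i+1) + 2 ≤ 2 * st18H n k i := by
  have hc : ((i-1 : ℕ) : ℤ) = (i:ℤ) - 1 := by omega
  have hc2 : ((i+1 : ℕ) : ℤ) = (i:ℤ) + 1 := by push_cast; ring
  rw [st18H, st18H, st18H, if_neg hik, hc, hc2]
  split_ifs with ha hb hb
  · omega
  · nlinarith
  · nlinarith
  · nlinarith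

lemma st18_gapk (n k : ℕ) (hk1 : 1 ≤ k) (hk2 : k ≤ n-1) :
    st18H n k (k-1) + st18H n k (k+1) = 2 * st18H n k k := by
  have hc : ((k-1 : ℕ) : ℤ) = (k:ℤ) - 1 := by omega
  have hc2 : ((k+1 : ℕ) : ℤ) = (k:ℤ) + 1 := by push_cast; ring
  rw [st18H, st18H, st18H, if_pos rfl, if_neg (by omega), if_neg (by omega), hc, hc2]
  ring

lemma st18_Hn (n k : ℕ) (hk2 : k ≤ n-1) (hn : 2 ≤ n) : st18H n k n = 0 := by
  rw [st18H, if_neg (by omega)]; ring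

lemma st18_coeff_n (n k : ℕ) (hn : 2 ≤ n) (hk1 : 1 ≤ k) (hk2 : k ≤ n-1) :
    (st18P n k).coeff n = 1 := by
  rw [st18P_coeff, if_pos (by omega : 2 ≤ n ∧ n-2 < n-1),
    if_neg (by omega : ¬(1 ≤ n ∧ n-1 < n-1)), if_neg (by omega : ¬ n < n-1)]
  have hc : ((n-2 : ℕ) : ℤ) = (n:ℤ) - 2 := by omega
  have he : st18G n k (n-2) = 0 := by
    rw [st18G, st18M, hc]
    split_ifs with h
    · have : (k:ℤ) = (n:ℤ) - 1 := by omega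
      nlinarith
    · ring
  rw [he]; norm_num

lemma st18_natDegree_le (n k : ℕ) (hn : 2 ≤ n) : (st18P n k).natDegree ≤ n := by
  have hQ : (st18Q n k).natDegree ≤ n-2 := by
    apply Polynomial.natDegree_sum_le_of_forall_le
    intro j hj
    apply le_trans (natDegree_C_mul_le _ _)
    rw [natDegree_X_pow]
    simp only [Finset.mem_range] at hj
    omega
  rw [st18P]
  apply le_trans (natDegree_add_le _ _)
  apply max_le
  apply le_trans (natDegree_add_le _ _)
  apply max_le
  · apply le_trans natDegree_mul_le
    rw [natDegree_X_pow]
    omega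
  · apply le_trans (natDegree_C_mul_le _ _)
    apply le_trans natDegree_mul_le
    rw [natDegree_X]
    omega
  · apply le_trans (natDegree_C_mul_le _ _)
    omega

lemma st18_root (n k : ℕ) :
    ∃ z : ℂ, Polynomial.aeval z (st18P n k) = 0 ∧ z.im ≠ 0 := by
  set r : ℝ := (10:ℝ)^(-st18M n k) with hr
  have hrpos : 0 < r := st18_zpow_pos _
  set ω : ℂ := (-1 + (Real.sqrt 3 : ℂ) * Complex.I)/2 with hω
  refine ⟨(r:ℂ) * ω, ?_, ?_⟩
  · have hs : ((Real.sqrt 3 : ℝ) : ℂ)^2 = 3 := by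
      norm_cast
      rw [Real.sq_sqrt]; norm_num
    have hω0 : ω^2 + ω + 1 = 0 := by
      rw [hω]
      linear_combination (-1/4 : ℂ) * hs + (((Real.sqrt 3:ℝ):ℂ)^2/4) * Complex.I_sq
    have hr2 : (10:ℝ)^(-(2*st18M n k)) = r^2 := by
      rw [hr, show -(2*st18M n k) = (-st18M n k) + (-st18M n k) by ring,
        zpow_add₀ (by norm_num : (10:ℝ) ≠ 0)]
      exact (sq _).symm
    have key : ((r:ℂ) * ω)^2 + (r:ℂ) * ((r:ℂ) * ω) + (r:ℂ)^2 = 0 := by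
      linear_combination (r:ℂ)^2 * hω0
    simp only [st18P, map_add, map_mul, map_pow, aeval_X, aeval_C, hr2,
      Complex.coe_algebraMap, Complex.ofReal_pow]
    linear_combination (aeval ((r:ℂ) * ω) (st18Q n k)) * key
  · have him : ((r:ℂ) * ω).im = r * (Real.sqrt 3 / 2) := by
      rw [hω]
      simp [Complex.mul_im, Complex.add_im, Complex.div_im]
      try ring
    rw [him]
    have : 0 < Real.sqrt 3 := Real.sqrt_pos.mpr (by norm_num)
    positivity

end

open Polynomial

/-- For every `n ≥ 2` and `1 ≤ k ≤ n-1` there is a monic degree-`n` real polynomial with all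
coefficients positive and at least one non-real root, satisfying Hutchinson's inequalities
`a_i² ≥ 4 a_{i-1} a_{i+1}` for all `i ∈ {1,...,n-1}`, `i ≠ k`, but `a_k² < 4 a_{k-1} a_{k+1}`. -/
theorem stmt18 (n : ℕ) (hn : 2 ≤ n) (k : ℕ) (hk1 : 1 ≤ k) (hk2 : k ≤ n - 1) :
    ∃ p : Polynomial ℝ, p.Monic ∧ p.natDegree = n ∧
      (∀ i ≤ n, 0 < p.coeff i) ∧
      (∃ z : ℂ, Polynomial.aeval z p = 0 ∧ z.im ≠ 0) ∧
      (∀ i, 1 ≤ i → i ≤ n - 1 → i ≠ k →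
        p.coeff i ^ 2 ≥ 4 * (p.coeff (i - 1) * p.coeff (i + 1))) ∧
      p.coeff k ^ 2 < 4 * (p.coeff (k - 1) * p.coeff (k + 1)) := by
  have hten : (10:ℝ) ≠ 0 := by norm_num
  refine ⟨st18P n k, ?_, ?_, ?_, st18_root n k, ?_, ?_⟩
  · exact monic_of_natDegree_le_of_coeff_eq_one n (st18_natDegree_le n k hn)
      (st18_coeff_n n k hn hk1 hk2)
  · refine le_antisymm (st18_natDegree_le n k hn) (le_natDegree_of_ne_zero ?_)
    rw [st18_coeff_n n k hn hk1 hk2]; norm_num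
  · intro i hi
    exact lt_of_lt_of_le (st18_zpow_pos _) (st18_low n k hn hk1 hk2 i hi)
  · intro i h1 h2 hik
    have l := st18_low n k hn hk1 hk2 i (by omega)
    have l1 := st18_low n k hn hk1 hk2 (i-1) (by omega)
    have l2 := st18_low n k hn hk1 hk2 (i+1) (by omega)
    have u1 := st18_up n k hn hk1 hk2 (i-1) (by omega)
    have u2 := st18_up n k hn hk1 hk2 (i+1) (by omega)
    have g := st18_gap n k hk1 hk2 i h1 h2 hik
    set A := (10:ℝ)^(st18H n k (i-1)) with hA
    set B := (10:ℝ)^(st18H n k (i+1)) with hB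
    have hApos : 0 < A := st18_zpow_pos _
    have hBpos : 0 < B := st18_zpow_pos _
    have hDpos : 0 < (10:ℝ)^(st18H n k i) := st18_zpow_pos _
    have e1 : 100 * (A * B) ≤ ((10:ℝ)^(st18H n k i))^2 := by
      have := st18_zpow_le g
      rw [zpow_add₀ hten, zpow_add₀ hten] at this
      calc 100 * (A * B) = A * B * (10:ℝ)^(2:ℤ) := by norm_num; ring
        _ ≤ (10:ℝ)^(2 * st18H n k i) := this
        _ = ((10:ℝ)^(st18H n k i))^2 := by
            rw [show 2 * st18H n k i = st18H n k i + st18H n k i by ring, zpow_add₀ hten, sq]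
    have e2 : ((10:ℝ)^(st18H n k i))^2 ≤ ((st18P n k).coeff i)^2 := by
      apply pow_le_pow_left₀ (le_of_lt hDpos) l
    have e3 : (st18P n k).coeff (i-1) * (st18P n k).coeff (i+1) ≤ 9 * (A * B) := by
      nlinarith
    nlinarith
  · have l := st18_low n k hn hk1 hk2 k (by omega)
    have l1 := st18_low n k hn hk1 hk2 (k-1) (by omega)
    have l2 := st18_low n k hn hk1 hk2 (k+1) (by omega)
    have u := st18_upk n k hn hk1 hk2
    have g := st18_gapk n k hk1 hk2
    set A := (10:ℝ)^(st18H n k (k-1)) with hA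
    set B := (10:ℝ)^(st18H n k (k+1)) with hB
    have hApos : 0 < A := st18_zpow_pos _
    have hBpos : 0 < B := st18_zpow_pos _
    have hDpos : 0 < (10:ℝ)^(st18H n k k) := st18_zpow_pos _
    have e1 : A * B = ((10:ℝ)^(st18H n k k))^2 := by
      rw [hA, hB, ← zpow_add₀ hten, g,
        show 2 * st18H n k k = st18H n k k + st18H n k k by ring, zpow_add₀ hten, sq]
    nlinarith
end
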